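/- arXiv:2101.11140 — 2 statements merged into one kernel-verified Lean document; each statement's English description precedes it below -/
import Mathlib

section
/- Let m ≥ 3, let A be a semi-symmetric strong M-tensor of order m and dimension n, and let b ∈ ℝⁿ with b > 0. Suppose sequences (y_k), (d_k), (α_k) are generated by Newton's method (Algorithm 2.4) with parameters ε ∈ (0,1), σ ∈ (0,1/2), ρ ∈ (0,1), starting from y₀ ∈ F_ε, and the method never terminates. Then the sequences (y_k) and (d_k) are bounded, and there exists a constant ᾱ > 0 such that y_k + α d_k ∈ F_ε for every k and every α ∈ (0, ᾱ). -/
open Finset Matrix Filter Topology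

noncomputable section

/-- `(A x^{m-1})_i`: action of an `m`th-order `n`-dimensional tensor, stored with its first
index separated and `q = m-1` trailing indices:
`(A x^{m-1})_i = ∑_{i₂,…,i_m} a_{i i₂…i_m} x_{i₂}⋯x_{i_m}`. -/
def tApp {n q : ℕ} (A : Fin n → (Fin q → Fin n) → ℝ) (x : Fin n → ℝ) (i : Fin n) : ℝ :=
  ∑ g : Fin q → Fin n, A i g * ∏ j, x (g j)

/-- Complex version of `tApp` (for eigenvalues). -/
def tAppC {n q : ℕ} (A : Fin n → (Fin q → Fin n) → ℝ) (x : Fin n → ℂ) (i : Fin n) : ℂ :=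
  ∑ g : Fin q → Fin n, (A i g : ℂ) * ∏ j, x (g j)

/-- The identity tensor: entry `1` when all indices coincide, `0` otherwise. -/
def identT (n q : ℕ) : Fin n → (Fin q → Fin n) → ℝ :=
  fun i g => if ∀ j, g j = i then 1 else 0

/-- `lam ∈ ℂ` is an eigenvalue of the tensor `B`: there is a nonzero `x ∈ ℂⁿ` with
`(B x^{m-1})_i = lam * x_i^{m-1}` for all `i`. -/
def IsTensorEigenvalue {n q : ℕ} (B : Fin n → (Fin q → Fin n) → ℝ) (lam : ℂ) : Prop :=
  ∃ x : Fin n → ℂ, x ≠ 0 ∧ ∀ i, tAppC B x i = lam * x i ^ q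

/-- Semi-symmetry: the entries `a_{i i₂…i_m}` are invariant under permutations of `i₂,…,i_m`. -/
def IsSemiSymmetric {n q : ℕ} (A : Fin n → (Fin q → Fin n) → ℝ) : Prop :=
  ∀ (i : Fin n) (g : Fin q → Fin n) (σ : Equiv.Perm (Fin q)), A i (g ∘ σ) = A i g

/-- Z-tensor: all off-diagonal entries are nonpositive. -/
def IsZTensor {n q : ℕ} (A : Fin n → (Fin q → Fin n) → ℝ) : Prop :=
  ∀ (i : Fin n) (g : Fin q → Fin n), ¬(∀ j, g j = i) → A i g ≤ 0

/-- Strong (nonsingular) M-tensor: `A = s·I − B` with `B ≥ 0` and `s > ρ(B)`,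
i.e. `|λ| < s` for every eigenvalue `λ` of `B`. -/
def IsStrongMTensor {n q : ℕ} (A : Fin n → (Fin q → Fin n) → ℝ) : Prop :=
  ∃ (s : ℝ) (B : Fin n → (Fin q → Fin n) → ℝ),
    (∀ i g, 0 ≤ B i g) ∧ (∀ i g, A i g = s * identT n q i g - B i g) ∧
    ∀ lam : ℂ, IsTensorEigenvalue B lam → ‖lam‖ < s

/-- Componentwise power `y^{[α]}`. -/
def cPow {n : ℕ} (y : Fin n → ℝ) (α : ℝ) : Fin n → ℝ := fun i => y i ^ α

/-- Euclidean norm on `Fin n → ℝ`. -/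
def enorm2 {n : ℕ} (x : Fin n → ℝ) : ℝ := Real.sqrt (∑ i, x i ^ 2)

/-- The Jacobian matrix of a map `f : ℝⁿ → ℝⁿ` at `y`. -/
def jacM {n : ℕ} (f : (Fin n → ℝ) → Fin n → ℝ) (y : Fin n → ℝ) :
    Matrix (Fin n) (Fin n) ℝ :=
  fun i j => fderiv ℝ (fun z => f z i) y (Pi.single j 1)

/-- `f(y) = A (y^{[1/(m-1)]})^{m-1} − b`, with `q = m−1`. -/
def fres {n q : ℕ} (A : Fin n → (Fin q → Fin n) → ℝ) (b : Fin n → ℝ)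
    (y : Fin n → ℝ) : Fin n → ℝ :=
  fun i => tApp A (cPow y (1 / (q : ℝ))) i - b i

/-- Nonsingular M-matrix: nonpositive off-diagonal entries and `M = s·1 − N` with
`N ≥ 0` entrywise and `s` larger than the spectral radius of `N`. -/
def IsNonsingularMMatrix {k : Type} [Fintype k] [DecidableEq k] (M : Matrix k k ℝ) : Prop :=
  (∀ i j, i ≠ j → M i j ≤ 0) ∧
  ∃ (s : ℝ) (N : Matrix k k ℝ), (∀ i j, 0 ≤ N i j) ∧
    M = s • (1 : Matrix k k ℝ) - N ∧
    ∀ μ ∈ spectrum ℂ (N.map (fun t : ℝ => (t : ℂ))), ‖μ‖ < s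

/-- The feasible set `F_ε = {y > 0 : A (y^{[1/(m-1)]})^{m-1} ≥ ε b}`. -/
def FSet {n q : ℕ} (A : Fin n → (Fin q → Fin n) → ℝ) (b : Fin n → ℝ) (ε : ℝ) :
    Set (Fin n → ℝ) :=
  {y | (∀ i, 0 < y i) ∧ ∀ i, ε * b i ≤ tApp A (cPow y (1 / (q : ℝ))) i}

/-- Acceptance of the trial steplength `t` in the line search: feasibility and
`‖f(y + t d)‖² ≤ (1 − 2σt)‖f(y)‖²`. -/
def StepOK {n q : ℕ} (A : Fin n → (Fin q → Fin n) → ℝ) (b : Fin n → ℝ)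
    (Fb : Set (Fin n → ℝ)) (σ : ℝ) (y d : Fin n → ℝ) (t : ℝ) : Prop :=
  y + t • d ∈ Fb ∧
    enorm2 (fres A b (y + t • d)) ^ 2 ≤ (1 - 2 * σ * t) * enorm2 (fres A b y) ^ 2

/-- Newton's method (Algorithm 2.4 resp. 3.4) with feasible set `Fb`, never terminating:
`y₀ ∈ Fb`; for every `k`, `f(y_k) ≠ 0`, `d_k` is the unique solution of
`f'(y_k) d = −f(y_k)`, `α_k = ρ^{i_k}` with `i_k` the least acceptable exponent, and
`y_{k+1} = y_k + α_k d_k`. -/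
def NewtonIter {n q : ℕ} (A : Fin n → (Fin q → Fin n) → ℝ) (b : Fin n → ℝ)
    (Fb : Set (Fin n → ℝ)) (σ ρ : ℝ) (y d : ℕ → Fin n → ℝ) (α : ℕ → ℝ) : Prop :=
  y 0 ∈ Fb ∧ ∀ k : ℕ,
    fres A b (y k) ≠ 0 ∧
    jacM (fres A b) (y k) *ᵥ d k = -fres A b (y k) ∧
    (∀ d', jacM (fres A b) (y k) *ᵥ d' = -fres A b (y k) → d' = d k) ∧
    (∃ ik : ℕ, α k = ρ ^ ik ∧ StepOK A b Fb σ (y k) (d k) (ρ ^ ik) ∧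
      ∀ i < ik, ¬StepOK A b Fb σ (y k) (d k) (ρ ^ i)) ∧
    y (k + 1) = y k + α k • d k

/-- Submatrix of `M` with rows indexed by `{i // P i}` and columns by `{i // Q i}`. -/
def subMat {n : ℕ} (M : Matrix (Fin n) (Fin n) ℝ) (P Q : Fin n → Prop) :
    Matrix {i // P i} {i // Q i} ℝ :=
  fun i j => M i.1 j.1

/-- `b` restricted to the index set `I₊ = {i : b_i > 0}`. -/
def bPlus {n : ℕ} (b : Fin n → ℝ) : {i : Fin n // 0 < b i} → ℝ := fun i => b i.1

/-- `F̄¹_ε = {y > 0 : (A(y^{[1/(m−1)]})^{m−1})_i ≥ ε b_i for all i ∈ I₊}`. -/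
def FBar1 {n q : ℕ} (A : Fin n → (Fin q → Fin n) → ℝ) (b : Fin n → ℝ) (ε : ℝ) :
    Set (Fin n → ℝ) :=
  {y | (∀ i, 0 < y i) ∧ ∀ i, 0 < b i → ε * b i ≤ tApp A (cPow y (1 / (q : ℝ))) i}

/-- `F̄²_{ε'} = {y > 0 : f'(y)_{I₊I₊} invertible and
`(A(y^{[1/(m−1)]})^{m−1})_{I₀} ≥ ε' f'(y)_{I₀I₊} f'(y)_{I₊I₊}⁻¹ b_{I₊}` componentwise}. -/
def FBar2 {n q : ℕ} (A : Fin n → (Fin q → Fin n) → ℝ) (b : Fin n → ℝ) (ε' : ℝ) :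
    Set (Fin n → ℝ) :=
  {y | (∀ i, 0 < y i) ∧
    IsUnit (subMat (jacM (fres A b) y) (fun i => 0 < b i) (fun i => 0 < b i)) ∧
    ∀ i : {i : Fin n // b i = 0},
      ε' * (subMat (jacM (fres A b) y) (fun i => b i = 0) (fun i => 0 < b i) *ᵥ
        ((subMat (jacM (fres A b) y) (fun i => 0 < b i) (fun i => 0 < b i))⁻¹ *ᵥ bPlus b)) i
        ≤ tApp A (cPow y (1 / (q : ℝ))) i.1}

/-- `F̄_{ε,ε'} = F̄¹_ε ∩ F̄²_{ε'}`. -/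
def FBar {n q : ℕ} (A : Fin n → (Fin q → Fin n) → ℝ) (b : Fin n → ℝ) (ε ε' : ℝ) :
    Set (Fin n → ℝ) :=
  FBar1 A b ε ∩ FBar2 A b ε'

/-- For every `i ∈ I₀` there exist indices `i₂,…,i_m ∈ I₊` with `a_{i i₂…i_m} ≠ 0`. -/
def I0Hyp {n q : ℕ} (A : Fin n → (Fin q → Fin n) → ℝ) (b : Fin n → ℝ) : Prop :=
  ∀ i : Fin n, b i = 0 → ∃ g : Fin q → Fin n, (∀ j, 0 < b (g j)) ∧ A i g ≠ 0

/-!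
Write `F(y) = A (y^{[1/(m-1)]})^{m-1}`, so `f = F - b`. Every entry of a Z-tensor `A` off the
diagonal is a nonpositive multiple of a monomial `∏ⱼ y_{gⱼ}^{1/(m-1)}`, which is concave and
positively homogeneous in `y`; so `F` is convex on the positive orthant and, by AM-GM term by
term, lies above its tangent maps: `F'(y) y' ≤ F(y')`, with Euler's identity `F'(y) y = F(y)` as
the equality case. Hence the Jacobian `F'(y)` is a Z-matrix with `F'(y) y = F(y) ≥ ε b > 0` on
`F_ε`, and such a matrix is inverse-positive. The Newton point solves `F'(y)(y + d) = b`, which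
gives `0 ≤ y + d ≤ ε⁻¹ y`, and then `F(y + a d) ≥ (1 - a) F(y) + a b ≥ ε b` for `0 ≤ a < 1`:
every steplength below `1` is feasible.

The residuals decrease, so `F(y_k) ≤ b + ‖f(y₀)‖`, while `F(y₀) ≥ ε b`. Comparing `y_k` with `y₀`
at an index where the ratio `y_{k,i} / y_{0,i}` is largest (a maximum principle for Z-tensors)
bounds that ratio uniformly, so `y_k ≤ K y₀`, and then `|d_k| ≤ ε⁻¹ y_k` is bounded too.
-/

lemma enorm2_nonneg {n : ℕ} (x : Fin n → ℝ) : 0 ≤ enorm2 x := Real.sqrt_nonneg _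

lemma abs_le_enorm2 {n : ℕ} (x : Fin n → ℝ) (i : Fin n) : |x i| ≤ enorm2 x := by
  rw [enorm2, ← Real.sqrt_sq_eq_abs]
  exact Real.sqrt_le_sqrt
    (single_le_sum (f := fun i => x i ^ 2) (fun i _ => sq_nonneg _) (mem_univ i))

lemma enorm2_le_of_abs_le {n : ℕ} {x z : Fin n → ℝ} (h : ∀ i, |x i| ≤ z i) :
    enorm2 x ≤ enorm2 z :=
  Real.sqrt_le_sqrt <| sum_le_sum fun i _ => sq_le_sq' (abs_le.mp (h i)).1 (abs_le.mp (h i)).2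

theorem Matrix.nonneg_of_mulVec_nonneg {ι : Type*} [Fintype ι] {M : Matrix ι ι ℝ}
    (hM : ∀ i j, i ≠ j → M i j ≤ 0) {y v : ι → ℝ} (hy : ∀ i, 0 < y i)
    (hMy : ∀ i, 0 < (M *ᵥ y) i) (hMv : ∀ i, 0 ≤ (M *ᵥ v) i) (l : ι) : 0 ≤ v l := by
  by_contra! hl
  obtain ⟨i, -, hi⟩ := exists_min_image univ (fun i => v i / y i) ⟨l, mem_univ l⟩
  set t := v i / y i
  have ht : t < 0 := (hi l (mem_univ l)).trans_lt (div_neg_of_neg_of_pos hl (hy l))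
  have hvy : ∀ j, t * y j ≤ v j := fun j => (le_div_iff₀ (hy j)).mp (hi j (mem_univ j))
  have hMvi : (M *ᵥ v) i ≤ t * (M *ᵥ y) i := by
    simp only [mulVec, dotProduct, mul_sum]
    refine sum_le_sum fun j _ => ?_
    rcases eq_or_ne i j with rfl | hij
    · rw [show v i = t * y i from (div_mul_cancel₀ _ (hy i).ne').symm]
      exact (mul_left_comm _ _ _).le
    · calc M i j * v j ≤ M i j * (t * y j) := mul_le_mul_of_nonpos_left (hvy j) (hM i j hij)
        _ = t * (M i j * y j) := by ring
  linarith [hMv i, mul_neg_of_neg_of_pos ht (hMy i)]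

lemma IsStrongMTensor.isZTensor {n q : ℕ} {A : Fin n → (Fin q → Fin n) → ℝ}
    (hA : IsStrongMTensor A) : IsZTensor A := by
  obtain ⟨s, B, hB, hAB, -⟩ := hA
  intro i g hg
  rw [hAB, identT, if_neg hg, mul_zero, zero_sub, neg_nonpos]
  exact hB i g

lemma jacM_mulVec {n : ℕ} (f : (Fin n → ℝ) → Fin n → ℝ) (y v : Fin n → ℝ) (i : Fin n) :
    (jacM f y *ᵥ v) i = fderiv ℝ (fun z => f z i) y v := by
  conv_rhs => rw [pi_eq_sum_univ' v]
  simp [mulVec, dotProduct, jacM, mul_comm]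

section RootMonomial

variable {n q : ℕ}

def rootMonomial (q : ℕ) {n : ℕ} (y : Fin n → ℝ) (g : Fin q → Fin n) : ℝ :=
  ∏ j, y (g j) ^ (1 / (q : ℝ))

lemma tApp_cPow_eq_sum (A : Fin n → (Fin q → Fin n) → ℝ) (y : Fin n → ℝ) (i : Fin n) :
    tApp A (cPow y (1 / (q : ℝ))) i = ∑ g, A i g * rootMonomial q y g := rfl

lemma rootMonomial_nonneg {y : Fin n → ℝ} (hy : ∀ i, 0 ≤ y i) (g : Fin q → Fin n) :
    0 ≤ rootMonomial q y g :=
  prod_nonneg fun _ _ => Real.rpow_nonneg (hy _) _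

lemma rootMonomial_const (hq : q ≠ 0) {y : Fin n → ℝ} {i : Fin n} (hy : 0 ≤ y i) :
    rootMonomial q y (fun _ => i) = y i := by
  rw [rootMonomial, prod_const, card_univ, Fintype.card_fin, one_div,
    Real.rpow_inv_natCast_pow hy hq]

lemma rootMonomial_smul (hq : q ≠ 0) {t : ℝ} (ht : 0 ≤ t) {y : Fin n → ℝ}
    (hy : ∀ i, 0 ≤ y i) (g : Fin q → Fin n) :
    rootMonomial q (t • y) g = t * rootMonomial q y g := by
  simp only [rootMonomial, Pi.smul_apply, smul_eq_mul, Real.mul_rpow ht (hy _),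
    prod_mul_distrib, prod_const, card_univ, Fintype.card_fin, one_div,
    Real.rpow_inv_natCast_pow ht hq]

lemma rootMonomial_mono {x y : Fin n → ℝ} (hx : ∀ i, 0 ≤ x i) (hxy : x ≤ y)
    (g : Fin q → Fin n) : rootMonomial q x g ≤ rootMonomial q y g :=
  prod_le_prod (fun _ _ => Real.rpow_nonneg (hx _) _) fun _ _ =>
    Real.rpow_le_rpow (hx _) (hxy _) (by positivity)

lemma rootMonomial_le_tangent (hq : q ≠ 0) {y y' : Fin n → ℝ} (hy : ∀ i, 0 < y i)
    (hy' : ∀ i, 0 ≤ y' i) (g : Fin q → Fin n) :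
    rootMonomial q y' g ≤ 1 / (q : ℝ) * rootMonomial q y g * ∑ j, y' (g j) / y (g j) := by
  have hamgm := Real.geom_mean_le_arith_mean_weighted univ
    (fun _ : Fin q => 1 / (q : ℝ)) (fun j => y' (g j) / y (g j))
    (fun _ _ => by positivity) (by simp [card_univ]; field_simp)
    (fun j _ => div_nonneg (hy' _) (hy _).le)
  have hsplit : rootMonomial q y' g
      = rootMonomial q y g * ∏ j, (y' (g j) / y (g j)) ^ (1 / (q : ℝ)) := by
    rw [rootMonomial, rootMonomial, ← prod_mul_distrib]
    refine prod_congr rfl fun j _ => ?_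
    rw [← Real.mul_rpow (hy _).le (div_nonneg (hy' _) (hy _).le),
      mul_div_cancel₀ _ (hy _).ne']
  rw [hsplit]
  calc _ ≤ rootMonomial q y g * ∑ j, 1 / (q : ℝ) * (y' (g j) / y (g j)) :=
        mul_le_mul_of_nonneg_left hamgm (rootMonomial_nonneg (fun i => (hy i).le) g)
    _ = _ := by rw [← mul_sum]; ring

lemma hasFDerivAt_rootMonomial (hq : q ≠ 0) {y : Fin n → ℝ} (hy : ∀ i, 0 < y i)
    (g : Fin q → Fin n) :
    HasFDerivAt (fun z : Fin n → ℝ => rootMonomial q z g)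
      (∑ j, (1 / (q : ℝ) * rootMonomial q y g / y (g j)) •
        (ContinuousLinearMap.proj (g j) : (Fin n → ℝ) →L[ℝ] ℝ)) y := by
  have h := HasFDerivAt.finsetProd (u := univ)
    (g := fun (j : Fin q) (z : Fin n → ℝ) => z (g j) ^ (1 / (q : ℝ)))
    (g' := fun j => (1 / (q : ℝ) * y (g j) ^ (1 / (q : ℝ) - 1)) •
      (ContinuousLinearMap.proj (g j) : (Fin n → ℝ) →L[ℝ] ℝ))
    (x := y) fun j _ => by
      have hpow : HasDerivAt (fun t : ℝ => t ^ (1 / (q : ℝ)))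
          (1 / (q : ℝ) * y (g j) ^ (1 / (q : ℝ) - 1)) (y (g j)) :=
        Real.hasDerivAt_rpow_const (Or.inl (hy (g j)).ne')
      exact hpow.comp_hasFDerivAt y
        (ContinuousLinearMap.proj (g j) : (Fin n → ℝ) →L[ℝ] ℝ).hasFDerivAt
  refine h.congr_fderiv (sum_congr rfl fun j _ => ?_)
  rw [smul_smul]
  congr 1
  rw [Real.rpow_sub (hy (g j)), Real.rpow_one, rootMonomial,
    ← prod_erase_mul univ (fun k => y (g k) ^ (1 / (q : ℝ))) (mem_univ j)]
  field_simp

end RootMonomial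

section Jacobian

variable {n q : ℕ} {A : Fin n → (Fin q → Fin n) → ℝ} {b : Fin n → ℝ}

lemma jacM_fres_mulVec (hq : q ≠ 0) {y : Fin n → ℝ} (hy : ∀ i, 0 < y i)
    (v : Fin n → ℝ) (i : Fin n) :
    (jacM (fres A b) y *ᵥ v) i
      = ∑ g, A i g * (1 / (q : ℝ) * rootMonomial q y g * ∑ j, v (g j) / y (g j)) := by
  have hD : HasFDerivAt (fun z => fres A b z i)
      (∑ g, A i g • ∑ j, (1 / (q : ℝ) * rootMonomial q y g / y (g j)) •
        (ContinuousLinearMap.proj (g j) : (Fin n → ℝ) →L[ℝ] ℝ)) y :=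
    (HasFDerivAt.fun_sum fun g _ =>
      (hasFDerivAt_rootMonomial hq hy g).const_mul (A i g)).sub_const (b i)
  rw [jacM_mulVec, hD.fderiv]
  simp only [_root_.sum_apply, _root_.smul_apply,
    ContinuousLinearMap.proj_apply, smul_eq_mul, mul_sum]
  refine sum_congr rfl fun g _ => sum_congr rfl fun j _ => ?_
  ring

lemma jacM_fres_mulVec_self (hq : q ≠ 0) {y : Fin n → ℝ} (hy : ∀ i, 0 < y i) (i : Fin n) :
    (jacM (fres A b) y *ᵥ y) i = tApp A (cPow y (1 / (q : ℝ))) i := by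
  rw [jacM_fres_mulVec hq hy, tApp_cPow_eq_sum]
  refine sum_congr rfl fun g _ => ?_
  simp only [div_self (hy _).ne', sum_const, card_univ, Fintype.card_fin, nsmul_eq_mul, mul_one]
  field_simp

lemma IsZTensor.jacM_fres_nonpos (hA : IsZTensor A) (hq : q ≠ 0) {y : Fin n → ℝ}
    (hy : ∀ i, 0 < y i) {i l : Fin n} (hil : i ≠ l) : jacM (fres A b) y i l ≤ 0 := by
  have h := jacM_fres_mulVec (A := A) (b := b) hq hy (Pi.single l 1) i
  rw [mulVec_single_one, col_apply] at h
  rw [h]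
  refine sum_nonpos fun g _ => ?_
  by_cases hg : ∀ j, g j = i
  · simp [hg, hil]
  · refine mul_nonpos_of_nonpos_of_nonneg (hA i g hg) (mul_nonneg
      (mul_nonneg (by positivity) (rootMonomial_nonneg (fun i => (hy i).le) g))
      (sum_nonneg fun j _ => div_nonneg ?_ (hy _).le))
    rw [Pi.single_apply]
    split_ifs <;> norm_num

lemma IsZTensor.jacM_fres_mulVec_le (hA : IsZTensor A) (hq : q ≠ 0) {y y' : Fin n → ℝ}
    (hy : ∀ i, 0 < y i) (hy' : ∀ i, 0 ≤ y' i) (i : Fin n) :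
    (jacM (fres A b) y *ᵥ y') i ≤ tApp A (cPow y' (1 / (q : ℝ))) i := by
  rw [jacM_fres_mulVec hq hy, tApp_cPow_eq_sum]
  refine sum_le_sum fun g _ => ?_
  by_cases hg : ∀ j, g j = i
  · obtain rfl : g = fun _ => i := funext hg
    rw [rootMonomial_const hq (hy i).le, rootMonomial_const hq (hy' i)]
    apply le_of_eq
    simp only [sum_const, card_univ, Fintype.card_fin, nsmul_eq_mul]
    have := (hy i).ne'
    field_simp
  · exact mul_le_mul_of_nonpos_left (rootMonomial_le_tangent hq hy hy' g) (hA i g hg)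

end Jacobian

section ZTensorComparison

variable {n q : ℕ} {A : Fin n → (Fin q → Fin n) → ℝ}

lemma IsZTensor.mul_tApp_le (hA : IsZTensor A) (hq : q ≠ 0) {x y : Fin n → ℝ} {t : ℝ}
    (hx : ∀ i, 0 ≤ x i) (hy : ∀ i, 0 ≤ y i) (ht : 0 ≤ t) (hxy : x ≤ t • y) {i : Fin n}
    (hi : x i = t * y i) :
    t * tApp A (cPow y (1 / (q : ℝ))) i ≤ tApp A (cPow x (1 / (q : ℝ))) i := by
  rw [tApp_cPow_eq_sum, tApp_cPow_eq_sum, mul_sum]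
  refine sum_le_sum fun g _ => ?_
  by_cases hg : ∀ j, g j = i
  · obtain rfl : g = fun _ => i := funext hg
    rw [rootMonomial_const hq (hy i), rootMonomial_const hq (hx i), hi]
    exact (mul_left_comm _ _ _).le
  · have hmono := rootMonomial_mono hx hxy g
    rw [rootMonomial_smul hq ht hy] at hmono
    calc t * (A i g * rootMonomial q y g) = A i g * (t * rootMonomial q y g) := by ring
      _ ≤ A i g * rootMonomial q x g := mul_le_mul_of_nonpos_left hmono (hA i g hg)

lemma IsZTensor.le_mul_of_tApp_le_mul (hA : IsZTensor A) (hq : q ≠ 0) {x y : Fin n → ℝ}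
    (hx : ∀ i, 0 ≤ x i) (hy : ∀ i, 0 < y i) (hFy : ∀ i, 0 < tApp A (cPow y (1 / (q : ℝ))) i)
    {K : ℝ} (hK : ∀ i, tApp A (cPow x (1 / (q : ℝ))) i ≤ K * tApp A (cPow y (1 / (q : ℝ))) i)
    (l : Fin n) : x l ≤ K * y l := by
  obtain ⟨i, -, hi⟩ := exists_max_image univ (fun i => x i / y i) ⟨l, mem_univ l⟩
  set t := x i / y i
  have hxy : x ≤ t • y := fun j => (div_le_iff₀ (hy j)).mp (hi j (mem_univ j))
  have htK : t ≤ K := le_of_mul_le_mul_right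
    ((hA.mul_tApp_le hq hx (fun j => (hy j).le) (div_nonneg (hx i) (hy i).le) hxy
      (div_mul_cancel₀ _ (hy i).ne').symm).trans (hK i)) (hFy i)
  calc x l ≤ t * y l := hxy l
    _ ≤ K * y l := mul_le_mul_of_nonneg_right htK (hy l).le

end ZTensorComparison

section NewtonStep

variable {n q : ℕ} {A : Fin n → (Fin q → Fin n) → ℝ} {b : Fin n → ℝ} {ε : ℝ}
  {y d : Fin n → ℝ}

lemma tApp_pos_of_mem_FSet (hε : 0 < ε) (hb : ∀ i, 0 < b i) (hy : y ∈ FSet A b ε)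
    (i : Fin n) : 0 < tApp A (cPow y (1 / (q : ℝ))) i :=
  (mul_pos hε (hb i)).trans_le (hy.2 i)

lemma jacM_fres_mulVec_add_of_newton (hq : q ≠ 0) (hy : ∀ i, 0 < y i)
    (hd : jacM (fres A b) y *ᵥ d = -fres A b y) : jacM (fres A b) y *ᵥ (y + d) = b := by
  funext i
  rw [mulVec_add, Pi.add_apply, jacM_fres_mulVec_self hq hy, hd, Pi.neg_apply, fres]
  ring

lemma newton_add_nonneg (hA : IsZTensor A) (hq : q ≠ 0) (hε : 0 < ε) (hb : ∀ i, 0 < b i)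
    (hy : y ∈ FSet A b ε) (hd : jacM (fres A b) y *ᵥ d = -fres A b y) (i : Fin n) :
    0 ≤ y i + d i :=
  nonneg_of_mulVec_nonneg (M := jacM (fres A b) y) (v := y + d)
    (fun _ _ => hA.jacM_fres_nonpos hq hy.1) hy.1
    (fun j => by rw [jacM_fres_mulVec_self hq hy.1]; exact tApp_pos_of_mem_FSet hε hb hy j)
    (fun j => by rw [jacM_fres_mulVec_add_of_newton hq hy.1 hd]; exact (hb j).le) i

lemma newton_add_le_inv_mul (hA : IsZTensor A) (hq : q ≠ 0) (hε : 0 < ε) (hb : ∀ i, 0 < b i)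
    (hy : y ∈ FSet A b ε) (hd : jacM (fres A b) y *ᵥ d = -fres A b y) (i : Fin n) :
    y i + d i ≤ ε⁻¹ * y i := by
  have h := nonneg_of_mulVec_nonneg (M := jacM (fres A b) y) (v := ε⁻¹ • y - (y + d))
    (fun _ _ => hA.jacM_fres_nonpos hq hy.1) hy.1
    (fun j => by rw [jacM_fres_mulVec_self hq hy.1]; exact tApp_pos_of_mem_FSet hε hb hy j)
    (fun j => ?_) i
  · simpa [sub_nonneg] using h
  · rw [mulVec_sub, mulVec_smul, jacM_fres_mulVec_add_of_newton hq hy.1 hd, Pi.sub_apply,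
      Pi.smul_apply, smul_eq_mul, jacM_fres_mulVec_self hq hy.1, sub_nonneg,
      le_inv_mul_iff₀ hε]
    exact hy.2 j

lemma abs_newton_dir_le (hA : IsZTensor A) (hq : q ≠ 0) (hε : 0 < ε) (hε1 : ε ≤ 1)
    (hb : ∀ i, 0 < b i) (hy : y ∈ FSet A b ε) (hd : jacM (fres A b) y *ᵥ d = -fres A b y)
    (i : Fin n) : |d i| ≤ ε⁻¹ * y i := by
  have hlo := newton_add_nonneg hA hq hε hb hy hd i
  have hhi := newton_add_le_inv_mul hA hq hε hb hy hd i
  have hε' : 1 ≤ ε⁻¹ := (one_le_inv₀ hε).mpr hε1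
  have hyi := hy.1 i
  rw [abs_le]
  constructor <;> nlinarith

lemma newton_add_smul_mem_FSet (hA : IsZTensor A) (hq : q ≠ 0) (hε : 0 < ε) (hε1 : ε ≤ 1)
    (hb : ∀ i, 0 < b i) (hy : y ∈ FSet A b ε) (hd : jacM (fres A b) y *ᵥ d = -fres A b y)
    {a : ℝ} (ha0 : 0 ≤ a) (ha1 : a < 1) : y + a • d ∈ FSet A b ε := by
  have hpos : ∀ i, 0 < (y + a • d) i := fun i => by
    have hyd := newton_add_nonneg hA hq hε hb hy hd i
    have hyi := hy.1 i
    show 0 < y i + a * d i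
    nlinarith
  refine ⟨hpos, fun i => ?_⟩
  have hFy := hy.2 i
  have hbi := hb i
  calc ε * b i ≤ (1 - a) * tApp A (cPow y (1 / (q : ℝ))) i + a * b i := by
        nlinarith [mul_le_mul_of_nonneg_left hFy (sub_nonneg.mpr ha1.le),
          mul_nonneg (mul_nonneg ha0 (sub_nonneg.mpr hε1)) hbi.le]
    _ = (jacM (fres A b) y *ᵥ (y + a • d)) i := by
        rw [mulVec_add, mulVec_smul, hd, Pi.add_apply, Pi.smul_apply, Pi.neg_apply,
          jacM_fres_mulVec_self hq hy.1, smul_eq_mul, fres]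
        ring
    _ ≤ _ := hA.jacM_fres_mulVec_le hq hy.1 (fun i => (hpos i).le) i

end NewtonStep

namespace NewtonIter

variable {n q : ℕ} {A : Fin n → (Fin q → Fin n) → ℝ} {b : Fin n → ℝ} {Fb : Set (Fin n → ℝ)}
  {σ ρ : ℝ} {y d : ℕ → Fin n → ℝ} {α : ℕ → ℝ}

lemma mem (h : NewtonIter A b Fb σ ρ y d α) (k : ℕ) : y k ∈ Fb := by
  induction k with
  | zero => exact h.1
  | succ k _ =>
    obtain ⟨-, -, -, ⟨ik, hα, ⟨hmem, -⟩, -⟩, hk⟩ := h.2 k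
    rwa [hk, hα]

lemma enorm2_fres_le_initial (h : NewtonIter A b Fb σ ρ y d α) (hσ : 0 ≤ σ) (hρ : 0 ≤ ρ)
    (k : ℕ) :
    enorm2 (fres A b (y k)) ≤ enorm2 (fres A b (y 0)) := by
  induction k with
  | zero => rfl
  | succ k ih =>
    obtain ⟨-, -, -, ⟨ik, hα, ⟨-, hdec⟩, -⟩, hk⟩ := h.2 k
    refine le_trans ?_ ih
    rw [← pow_le_pow_iff_left₀ (enorm2_nonneg _) (enorm2_nonneg _) two_ne_zero, hk, hα]
    nlinarith [mul_nonneg (mul_nonneg hσ (pow_nonneg hρ ik)) (sq_nonneg (enorm2 (fres A b (y k))))]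

lemma exists_le_mul_initial {ε : ℝ} (hA : IsZTensor A) (hq : q ≠ 0) (hb : ∀ i, 0 < b i)
    (hε : 0 < ε) (h : NewtonIter A b (FSet A b ε) σ ρ y d α) (hσ : 0 ≤ σ) (hρ : 0 ≤ ρ) :
    ∃ K, ∀ k i, y k i ≤ K * y 0 i := by
  set C := enorm2 (fres A b (y 0))
  have hC : 0 ≤ C := enorm2_nonneg _
  have hterm : ∀ i, 0 ≤ (b i + C) / (ε * b i) := fun i =>
    div_nonneg (by linarith [hb i]) (mul_pos hε (hb i)).le
  set K := ∑ i, (b i + C) / (ε * b i)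
  refine ⟨K, fun k => hA.le_mul_of_tApp_le_mul hq (fun i => ((h.mem k).1 i).le) (h.mem 0).1
    (tApp_pos_of_mem_FSet hε hb (h.mem 0)) fun i => ?_⟩
  have hres : tApp A (cPow (y k) (1 / (q : ℝ))) i ≤ b i + C := by
    have := (abs_le.mp ((abs_le_enorm2 _ i).trans (h.enorm2_fres_le_initial hσ hρ k))).2
    rw [fres] at this
    linarith
  calc tApp A (cPow (y k) (1 / (q : ℝ))) i ≤ b i + C := hres
    _ = (b i + C) / (ε * b i) * (ε * b i) := (div_mul_cancel₀ _ (mul_pos hε (hb i)).ne').symm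
    _ ≤ K * (ε * b i) := mul_le_mul_of_nonneg_right
        (single_le_sum (fun j _ => hterm j) (mem_univ i)) (mul_pos hε (hb i)).le
    _ ≤ K * tApp A (cPow (y 0) (1 / (q : ℝ))) i :=
        mul_le_mul_of_nonneg_left ((h.mem 0).2 i) (sum_nonneg fun j _ => hterm j)

end NewtonIter

theorem newton_iterates_bounded_and_uniform_steplength_general {m n : ℕ} (hm : 3 ≤ m)
    (A : Fin n → (Fin (m - 1) → Fin n) → ℝ)
    (hM : IsStrongMTensor A)
    (b : Fin n → ℝ) (hb : ∀ i, 0 < b i)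
    (ε σ ρ : ℝ) (hε0 : 0 < ε) (hε1 : ε < 1) (hσ0 : 0 < σ)
    (hρ0 : 0 < ρ)
    (y d : ℕ → Fin n → ℝ) (α : ℕ → ℝ)
    (halg : NewtonIter A b (FSet A b ε) σ ρ y d α) :
    (∃ C : ℝ, ∀ k : ℕ, enorm2 (y k) ≤ C) ∧
    (∃ C : ℝ, ∀ k : ℕ, enorm2 (d k) ≤ C) ∧
    ∃ abar : ℝ, 0 < abar ∧ ∀ k : ℕ, ∀ a : ℝ, 0 < a → a < abar →
      y k + a • d k ∈ FSet A b ε := by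
  have hA := hM.isZTensor
  have hq : m - 1 ≠ 0 := by omega
  have hdir : ∀ k, jacM (fres A b) (y k) *ᵥ d k = -fres A b (y k) := fun k => (halg.2 k).2.1
  obtain ⟨K, hK⟩ := halg.exists_le_mul_initial hA hq hb hε0 hσ0.le hρ0.le
  refine ⟨⟨enorm2 fun i => K * y 0 i, fun k => enorm2_le_of_abs_le fun i => ?_⟩,
    ⟨enorm2 fun i => ε⁻¹ * (K * y 0 i), fun k => enorm2_le_of_abs_le fun i => ?_⟩,
    1, one_pos, fun k a ha0 ha1 =>
      newton_add_smul_mem_FSet hA hq hε0 hε1.le hb (halg.mem k) (hdir k) ha0.le ha1⟩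
  · rw [abs_of_pos ((halg.mem k).1 i)]
    exact hK k i
  · exact (abs_newton_dir_le hA hq hε0 hε1.le hb (halg.mem k) (hdir k) i).trans
      (mul_le_mul_of_nonneg_left (hK k i) (inv_nonneg.mpr hε0.le))

theorem newton_iterates_bounded_and_uniform_steplength {m n : ℕ} (hm : 3 ≤ m)
    (A : Fin n → (Fin (m - 1) → Fin n) → ℝ)
    (hsym : IsSemiSymmetric A) (hM : IsStrongMTensor A)
    (b : Fin n → ℝ) (hb : ∀ i, 0 < b i)
    (ε σ ρ : ℝ) (hε0 : 0 < ε) (hε1 : ε < 1) (hσ0 : 0 < σ) (hσ1 : σ < 1 / 2)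
    (hρ0 : 0 < ρ) (hρ1 : ρ < 1)
    (y d : ℕ → Fin n → ℝ) (α : ℕ → ℝ)
    (halg : NewtonIter A b (FSet A b ε) σ ρ y d α) :
    (∃ C : ℝ, ∀ k : ℕ, enorm2 (y k) ≤ C) ∧
    (∃ C : ℝ, ∀ k : ℕ, enorm2 (d k) ≤ C) ∧
    ∃ abar : ℝ, 0 < abar ∧ ∀ k : ℕ, ∀ a : ℝ, 0 < a → a < abar →
      y k + a • d k ∈ FSet A b ε :=
  newton_iterates_bounded_and_uniform_steplength_general hm A hM b hb ε σ ρ hε0 hε1 hσ0 hρ0 y d α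
    halg
end
end

section
/- Let m ≥ 3 and let A be a semi-symmetric mth-order n-dimensional Z-tensor. Then for every y ∈ ℝⁿ with y > 0 componentwise, the Jacobian matrix g'(y) of the map g(y) = A (y^{[1/(m−1)]})^{m−1} is a Z-matrix: all of its off-diagonal entries are nonpositive. -/
open Finset Matrix Filter Topology

noncomputable section

/-! By the product rule, on the positive orthant the partial derivative `∂/∂z_j` of a monomial
`∏ₖ z_{gₖ}^α` with `α ≥ 0` is a sum of nonnegative terms, and it vanishes unless `j` occurs
among the `gₖ`; so it kills the diagonal monomial `z_i^{qα}` when `j ≠ i`. Hence `∂(A (z^{[α]})^{m-1})_i / ∂z_j` is a sum of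
off-diagonal entries `a_{i g} ≤ 0` times nonnegative numbers. -/

section MonomialDerivative

variable {ι κ : Type*} [Fintype ι] [DecidableEq ι] [Fintype κ]

theorem hasFDerivAt_prod_rpow (g : ι → κ) (α : ℝ) {y : κ → ℝ} (hy : ∀ k, 0 < y k) :
    HasFDerivAt (fun z : κ → ℝ => ∏ k, z (g k) ^ α)
      (∑ k, (∏ l ∈ univ.erase k, y (g l) ^ α) •
        (α * y (g k) ^ (α - 1)) • (ContinuousLinearMap.proj (g k) : (κ → ℝ) →L[ℝ] ℝ))
      y :=
  HasFDerivAt.finsetProd fun k _ =>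
    (ContinuousLinearMap.proj (g k) : (κ → ℝ) →L[ℝ] ℝ).hasFDerivAt.rpow_const
      (Or.inl (hy (g k)).ne')

variable [DecidableEq κ]

theorem fderiv_prod_rpow_single (g : ι → κ) (α : ℝ) {y : κ → ℝ} (hy : ∀ k, 0 < y k) (j : κ) :
    fderiv ℝ (fun z : κ → ℝ => ∏ k, z (g k) ^ α) y (Pi.single j 1) =
      ∑ k, (∏ l ∈ univ.erase k, y (g l) ^ α) *
        (α * y (g k) ^ (α - 1) * Pi.single (M := fun _ => ℝ) j 1 (g k)) := by
  simp [(hasFDerivAt_prod_rpow g α hy).fderiv, mul_assoc]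

theorem fderiv_prod_rpow_single_nonneg (g : ι → κ) {α : ℝ} (hα : 0 ≤ α) {y : κ → ℝ}
    (hy : ∀ k, 0 < y k) (j : κ) :
    0 ≤ fderiv ℝ (fun z : κ → ℝ => ∏ k, z (g k) ^ α) y (Pi.single j 1) := by
  rw [fderiv_prod_rpow_single g α hy]
  refine sum_nonneg fun k _ =>
    mul_nonneg (prod_nonneg fun l _ => Real.rpow_nonneg (hy (g l)).le α) ?_
  have : 0 ≤ Pi.single (M := fun _ => ℝ) j 1 (g k) := by
    rcases eq_or_ne (g k) j with h | h <;> simp [h]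
  have := Real.rpow_nonneg (hy (g k)).le (α - 1)
  positivity

theorem fderiv_prod_rpow_single_of_forall_ne (g : ι → κ) (α : ℝ) {y : κ → ℝ}
    (hy : ∀ k, 0 < y k) {j : κ} (hj : ∀ k, g k ≠ j) :
    fderiv ℝ (fun z : κ → ℝ => ∏ k, z (g k) ^ α) y (Pi.single j 1) = 0 := by
  simp [fderiv_prod_rpow_single g α hy, hj]

end MonomialDerivative

theorem jacM_tApp_cPow {n q : ℕ} (A : Fin n → (Fin q → Fin n) → ℝ) (α : ℝ) {y : Fin n → ℝ}
    (hy : ∀ i, 0 < y i) (i j : Fin n) :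
    jacM (fun z => tApp A (cPow z α)) y i j =
      ∑ g, A i g * fderiv ℝ (fun z : Fin n → ℝ => ∏ k, z (g k) ^ α) y (Pi.single j 1) := by
  have hderiv := HasFDerivAt.fun_sum fun g (_ : g ∈ univ) =>
    (hasFDerivAt_prod_rpow g α hy).const_mul (A i g)
  simp [jacM, tApp, cPow, hderiv.fderiv, (hasFDerivAt_prod_rpow _ α hy).fderiv]

theorem IsZTensor.jacM_tApp_cPow_nonpos {n q : ℕ} {A : Fin n → (Fin q → Fin n) → ℝ}
    (hZ : IsZTensor A) {α : ℝ} (hα : 0 ≤ α) {y : Fin n → ℝ} (hy : ∀ i, 0 < y i)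
    {i j : Fin n} (hij : i ≠ j) :
    jacM (fun z => tApp A (cPow z α)) y i j ≤ 0 := by
  rw [jacM_tApp_cPow A α hy]
  refine sum_nonpos fun g _ => ?_
  by_cases hdiag : ∀ k, g k = i
  · rw [fderiv_prod_rpow_single_of_forall_ne g α hy fun k => hdiag k ▸ hij, mul_zero]
  · exact mul_nonpos_of_nonpos_of_nonneg (hZ i g hdiag)
      (fderiv_prod_rpow_single_nonneg g hα hy j)

theorem jacobian_is_Zmatrix_general {m n : ℕ}
    (A : Fin n → (Fin (m - 1) → Fin n) → ℝ)
    (hZ : IsZTensor A) :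
    ∀ y : Fin n → ℝ, (∀ i, 0 < y i) →
      ∀ i j, i ≠ j →
        jacM (fun z => tApp A (cPow z (1 / ((m - 1 : ℕ) : ℝ)))) y i j ≤ 0 :=
  fun _ hy _ _ hij => hZ.jacM_tApp_cPow_nonpos (by positivity) hy hij

theorem jacobian_is_Zmatrix {m n : ℕ} (hm : 3 ≤ m)
    (A : Fin n → (Fin (m - 1) → Fin n) → ℝ)
    (hZ : IsZTensor A) (hsym : IsSemiSymmetric A) :
    ∀ y : Fin n → ℝ, (∀ i, 0 < y i) →
      ∀ i j, i ≠ j →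
        jacM (fun z => tApp A (cPow z (1 / ((m - 1 : ℕ) : ℝ)))) y i j ≤ 0 :=
  jacobian_is_Zmatrix_general A hZ
end
end
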